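/- Let n ≤ m and let Q ⊆ ℝⁿ be absolutely permutation-invariant. Let Σ(Q) := {U·(Diag s)·Vᵀ : U an n×n orthogonal matrix, V an m×m orthogonal matrix, s ∈ Q} be the associated spectral set of real n×m matrices, where Diag s is the n×m matrix whose (i,i) entries are sᵢ and all other entries are zero. Let X = U·(Diag x)·Vᵀ with U, V orthogonal and x ∈ ℝⁿ satisfying x₁ ≥ x₂ ≥ … ≥ xₙ ≥ 0. If z ∈ Q satisfies |x − z| = d(x, Q), then Y := U·(Diag z)·Vᵀ lies in Σ(Q) and satisfies ‖X − Y‖ = d(X, Σ(Q)), where ‖·‖ is the Frobenius norm and d(X, Σ(Q)) := inf_{Z∈Σ(Q)}‖X − Z‖. -/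

import Mathlib

open Matrix

noncomputable section

/-- The Euclidean norm on `ℝⁿ` (vectors as functions). -/
def vnorm {n : ℕ} (x : Fin n → ℝ) : ℝ := Real.sqrt (∑ i, x i ^ 2)

/-- Euclidean distance from a point to a set in `ℝⁿ`. -/
def vdistSet {n : ℕ} (x : Fin n → ℝ) (Q : Set (Fin n → ℝ)) : ℝ :=
  sInf ((fun y => vnorm (x - y)) '' Q)

/-- The Frobenius norm of a real matrix. -/
def frobNorm {n m : ℕ} (A : Matrix (Fin n) (Fin m) ℝ) : ℝ :=
  Real.sqrt (∑ i, ∑ j, A i j ^ 2)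

/-- Frobenius distance from a matrix to a set of matrices. -/
def frobDistSet {n m : ℕ} (X : Matrix (Fin n) (Fin m) ℝ)
    (S : Set (Matrix (Fin n) (Fin m) ℝ)) : ℝ :=
  sInf ((fun Z => frobNorm (X - Z)) '' S)

/-- `Q ⊆ ℝⁿ` is absolutely permutation-invariant: stable under permutations of coordinates
and coordinate-wise changes of sign. -/
def AbsPermInv {n : ℕ} (Q : Set (Fin n → ℝ)) : Prop :=
  ∀ (π : Equiv.Perm (Fin n)) (e : Fin n → ℝ), (∀ i, e i = 1 ∨ e i = -1) →
    ∀ x ∈ Q, (fun i => e i * x (π i)) ∈ Q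

/-- The `n × m` matrix with `(i,i)` entries `s i` and all other entries zero. -/
def rdiag (n m : ℕ) (s : Fin n → ℝ) : Matrix (Fin n) (Fin m) ℝ :=
  Matrix.of fun i j => if (j : ℕ) = (i : ℕ) then s i else 0

/-!
With `P = Uᵀ U'` and `R = Vᵀ V'`, orthogonal invariance of the Frobenius norm gives
`‖X - U' Diag(s) V'ᵀ‖² = |x|² + |s|² - 2 ∑ₐ ∑_c xₐ s_c P_ac R_ac`. The matrix `(|P_ac| |R_ac|)` is
doubly substochastic (AM-GM against the unit rows and columns of `P` and `R`), so the
rearrangement inequality for such matrices bounds the cross term by `⟪x, σ⟫`, where `σ` is the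
decreasing rearrangement of `|s|`. Hence `‖X - Z‖ ≥ |x - σ| ≥ d(x, Q)` because `σ ∈ Q`, while the
candidate `Y` attains `|x - z| = d(x, Q)`.
-/

open Finset

section Rearrangement

variable {ι : Type*} [LinearOrder ι]

theorem sum_mul_nonneg_of_antitone_of_prefix_sum_nonneg {x d : ι → ℝ} (hx : Antitone x)
    (hx0 : ∀ i, 0 ≤ x i) (s : Finset ι) (hd : ∀ a ∈ s, 0 ≤ ∑ i ∈ s with i ≤ a, d i) :
    0 ≤ ∑ i ∈ s, x i * d i := by
  suffices ∀ c, (∀ i ∈ s, c ≤ x i) → c * ∑ i ∈ s, d i ≤ ∑ i ∈ s, x i * d i by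
    simpa using this 0 fun i _ => hx0 i
  induction s using Finset.induction_on_max with
  | empty => simp
  | insert a s hlt ih =>
    intro c hc
    have ha : a ∉ s := fun h => lt_irrefl a (hlt a h)
    have hd_s : ∀ b ∈ s, 0 ≤ ∑ i ∈ s with i ≤ b, d i := fun b hb => by
      have := hd b (mem_insert_of_mem hb)
      rwa [filter_insert, if_neg (not_le.2 (hlt b hb))] at this
    have htotal : 0 ≤ ∑ i ∈ insert a s, d i := by
      simpa [filter_true_of_mem fun i hi => (mem_insert.1 hi).elim le_of_eq
        fun h => (hlt i h).le] using hd a (mem_insert_self a s)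
    have hxa : ∀ i ∈ s, x a ≤ x i := fun i hi => hx (hlt i hi).le
    calc c * ∑ i ∈ insert a s, d i ≤ x a * ∑ i ∈ insert a s, d i :=
          mul_le_mul_of_nonneg_right (hc a (mem_insert_self a s)) htotal
      _ = x a * d a + x a * ∑ i ∈ s, d i := by rw [sum_insert ha, mul_add]
      _ ≤ x a * d a + ∑ i ∈ s, x i * d i := by gcongr; exact ih hd_s (x a) hxa
      _ = ∑ i ∈ insert a s, x i * d i := by rw [sum_insert ha]

variable [Fintype ι]

theorem sum_mul_le_sum_Iic_of_antitone {y c : ι → ℝ} (hy : Antitone y) (hy0 : ∀ i, 0 ≤ y i)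
    (hc0 : ∀ j, 0 ≤ c j) (hc1 : ∀ j, c j ≤ 1) (a : ι) (hc : ∑ j, c j ≤ #{j | j ≤ a}) :
    ∑ j, c j * y j ≤ ∑ j with j ≤ a, y j := by
  set e : ι → ℝ := fun j => c j - if j ≤ a then 1 else 0
  have hcompare : ∀ j, e j * y j ≤ e j * y a := by
    intro j
    by_cases hj : j ≤ a
    · exact mul_le_mul_of_nonpos_left (hy hj) (by simp [e, hj, hc1 j])
    · exact mul_le_mul_of_nonneg_left (hy (not_le.1 hj).le) (by simp [e, hj, hc0 j])
  have hsum : ∑ j, e j = ∑ j, c j - #{j | j ≤ a} := by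
    simp only [e, sum_sub_distrib, sum_boole]
  calc ∑ j, c j * y j = ∑ j, e j * y j + ∑ j with j ≤ a, y j := by
        simp only [e, sub_mul, sum_sub_distrib, sum_filter, ite_mul, one_mul, zero_mul]
        ring
    _ ≤ ∑ j, e j * y a + ∑ j with j ≤ a, y j := by
        linarith [sum_le_sum fun j (_ : j ∈ univ) => hcompare j]
    _ ≤ ∑ j with j ≤ a, y j := by
        rw [← sum_mul, hsum]
        linarith [mul_nonpos_of_nonpos_of_nonneg (sub_nonpos.2 hc) (hy0 a)]

end Rearrangement

structure IsDoublySubstochastic {ι : Type*} [Fintype ι] (D : Matrix ι ι ℝ) : Prop where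
  nonneg : ∀ i j, 0 ≤ D i j
  sum_row_le_one : ∀ i, ∑ j, D i j ≤ 1
  sum_col_le_one : ∀ j, ∑ i, D i j ≤ 1

namespace IsDoublySubstochastic

variable {ι : Type*} [Fintype ι] {D : Matrix ι ι ℝ}

theorem submatrix (hD : IsDoublySubstochastic D) (e f : ι ≃ ι) :
    IsDoublySubstochastic (D.submatrix e f) where
  nonneg i j := hD.nonneg (e i) (f j)
  sum_row_le_one i := by
    simpa only [Matrix.submatrix_apply, Equiv.sum_comp f (D (e i))] using hD.sum_row_le_one (e i)
  sum_col_le_one j := by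
    simpa only [Matrix.submatrix_apply, Equiv.sum_comp e (D · (f j))] using
      hD.sum_col_le_one (f j)

theorem sum_sum_mul_le [LinearOrder ι] (hD : IsDoublySubstochastic D) {x y : ι → ℝ}
    (hx : Antitone x) (hx0 : ∀ i, 0 ≤ x i) (hy : Antitone y) (hy0 : ∀ i, 0 ≤ y i) :
    ∑ i, ∑ j, x i * y j * D i j ≤ ∑ i, x i * y i := by
  -- The column sums of `D` over `{i ≤ a}` are weights in `[0, 1]` of total mass `≤ #{i ≤ a}`.
  have hprefix : ∀ a, ∑ i with i ≤ a, ∑ j, D i j * y j ≤ ∑ i with i ≤ a, y i := by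
    intro a
    simp only [sum_comm (s := univ.filter (· ≤ a)), ← sum_mul]
    refine sum_mul_le_sum_Iic_of_antitone hy hy0 (fun j => sum_nonneg fun i _ => hD.nonneg i j)
      (fun j => (sum_le_univ_sum_of_nonneg (hD.nonneg · j)).trans (hD.sum_col_le_one j)) a ?_
    rw [sum_comm, card_eq_sum_ones, Nat.cast_sum, Nat.cast_one]
    exact sum_le_sum fun i _ => hD.sum_row_le_one i
  have key := sum_mul_nonneg_of_antitone_of_prefix_sum_nonneg hx hx0 univ
    (d := fun i => y i - ∑ j, D i j * y j) fun a _ => by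
      simpa only [sum_sub_distrib, sub_nonneg] using hprefix a
  simp only [mul_sub, mul_sum, sum_sub_distrib, sub_nonneg] at key
  calc ∑ i, ∑ j, x i * y j * D i j = ∑ i, ∑ j, x i * (D i j * y j) := by
        simp only [mul_comm, mul_left_comm]
    _ ≤ ∑ i, x i * y i := key

end IsDoublySubstochastic

section Orthogonal

variable {ι : Type*} [Fintype ι] [DecidableEq ι] {A : Matrix ι ι ℝ}

theorem sum_sq_row_eq_one_of_mul_transpose_eq_one (hA : A * Aᵀ = 1) (i : ι) :
    ∑ j, A i j ^ 2 = 1 := by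
  simpa [Matrix.mul_apply, sq] using congrFun (congrFun hA i) i

theorem sum_sq_col_eq_one_of_mul_transpose_eq_one (hA : A * Aᵀ = 1) (j : ι) :
    ∑ i, A i j ^ 2 = 1 :=
  sum_sq_row_eq_one_of_mul_transpose_eq_one (A := Aᵀ)
    (by rw [Matrix.transpose_transpose]; exact mul_eq_one_comm.mp hA) j

end Orthogonal

theorem sum_abs_mul_abs_le_one {ι : Type*} {s : Finset ι} {p q : ι → ℝ}
    (hp : ∑ i ∈ s, p i ^ 2 ≤ 1) (hq : ∑ i ∈ s, q i ^ 2 ≤ 1) : ∑ i ∈ s, |p i| * |q i| ≤ 1 := by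
  have hamgm : ∀ i ∈ s, |p i| * |q i| ≤ (p i ^ 2 + q i ^ 2) / 2 := fun i _ => by
    nlinarith [two_mul_le_add_sq |p i| |q i|, sq_abs (p i), sq_abs (q i)]
  calc ∑ i ∈ s, |p i| * |q i| ≤ ∑ i ∈ s, (p i ^ 2 + q i ^ 2) / 2 := sum_le_sum hamgm
    _ ≤ 1 := by rw [← sum_div, sum_add_distrib]; linarith

theorem sum_castLE_le_sum {n m : ℕ} (hnm : n ≤ m) {g : Fin m → ℝ} (hg : ∀ j, 0 ≤ g j) :
    ∑ c : Fin n, g (Fin.castLE hnm c) ≤ ∑ j, g j := by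
  simpa only [sum_map, Fin.castLEEmb_apply] using
    sum_le_univ_sum_of_nonneg (s := univ.map (Fin.castLEEmb hnm)) hg

section Rdiag

variable {n m : ℕ}

theorem frobNorm_sq (M : Matrix (Fin n) (Fin m) ℝ) : frobNorm M ^ 2 = ∑ i, ∑ j, M i j ^ 2 :=
  Real.sq_sqrt (by positivity)

theorem vnorm_sq (x : Fin n → ℝ) : vnorm x ^ 2 = ∑ i, x i ^ 2 :=
  Real.sq_sqrt (by positivity)

theorem vnorm_sub_sq (x y : Fin n → ℝ) :
    vnorm (x - y) ^ 2 = vnorm x ^ 2 - 2 * ∑ i, x i * y i + vnorm y ^ 2 := by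
  simp only [vnorm_sq, Pi.sub_apply, sub_sq, sum_add_distrib, sum_sub_distrib, mul_sum, mul_assoc]

theorem frobNorm_eq_sqrt_trace (M : Matrix (Fin n) (Fin m) ℝ) :
    frobNorm M = √(M * Mᵀ).trace := by
  simp [frobNorm, Matrix.trace, Matrix.mul_apply, sq]

theorem frobNorm_mul_mul_transpose {U : Matrix (Fin n) (Fin n) ℝ} {V : Matrix (Fin m) (Fin m) ℝ}
    (hU : U * Uᵀ = 1) (hV : V * Vᵀ = 1) (M : Matrix (Fin n) (Fin m) ℝ) :
    frobNorm (U * M * Vᵀ) = frobNorm M := by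
  rw [frobNorm_eq_sqrt_trace, frobNorm_eq_sqrt_trace]
  congr 1
  calc (U * M * Vᵀ * (U * M * Vᵀ)ᵀ).trace = (U * (M * Mᵀ) * Uᵀ).trace := by
        simp only [Matrix.transpose_mul, Matrix.transpose_transpose, Matrix.mul_assoc]
        rw [← Matrix.mul_assoc Vᵀ, mul_eq_one_comm.mp hV, Matrix.one_mul]
    _ = (M * Mᵀ).trace := by
        rw [Matrix.trace_mul_cycle, mul_eq_one_comm.mp hU, Matrix.one_mul]

theorem rdiag_apply (hnm : n ≤ m) (s : Fin n → ℝ) (i : Fin n) (j : Fin m) :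
    rdiag n m s i j = if j = Fin.castLE hnm i then s i else 0 := by
  simp [rdiag, Fin.ext_iff]

theorem rdiag_sub (x y : Fin n → ℝ) : rdiag n m (x - y) = rdiag n m x - rdiag n m y := by
  ext i j
  simp only [rdiag, Matrix.of_apply, Matrix.sub_apply, Pi.sub_apply]
  split_ifs <;> simp

theorem frobNorm_rdiag (hnm : n ≤ m) (s : Fin n → ℝ) : frobNorm (rdiag n m s) = vnorm s := by
  simp [frobNorm, vnorm, rdiag_apply hnm, ite_pow]

theorem frobNorm_rdiag_sub_sq (hnm : n ≤ m) (x : Fin n → ℝ) (M : Matrix (Fin n) (Fin m) ℝ) :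
    frobNorm (rdiag n m x - M) ^ 2
      = vnorm x ^ 2 - 2 * ∑ i, x i * M i (Fin.castLE hnm i) + frobNorm M ^ 2 := by
  rw [← frobNorm_rdiag hnm, frobNorm_sq, frobNorm_sq, frobNorm_sq]
  simp only [Matrix.sub_apply, sub_sq, sum_add_distrib, sum_sub_distrib, mul_sum, mul_assoc,
    rdiag_apply hnm, ite_mul, zero_mul]
  simp

theorem mul_rdiag_mul_transpose_apply (hnm : n ≤ m) (P : Matrix (Fin n) (Fin n) ℝ)
    (s : Fin n → ℝ) (Q : Matrix (Fin m) (Fin m) ℝ) (a : Fin n) (b : Fin m) :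
    (P * rdiag n m s * Qᵀ) a b = ∑ c, P a c * s c * Q b (Fin.castLE hnm c) := by
  simp only [Matrix.mul_apply, rdiag_apply hnm, mul_ite, mul_zero, Matrix.transpose_apply, sum_mul,
    ite_mul, zero_mul]
  rw [sum_comm]
  simp

end Rdiag

theorem isDoublySubstochastic_abs_mul_abs {n m : ℕ} (hnm : n ≤ m)
    {P : Matrix (Fin n) (Fin n) ℝ} {Q : Matrix (Fin m) (Fin m) ℝ}
    (hP : P * Pᵀ = 1) (hQ : Q * Qᵀ = 1) :
    IsDoublySubstochastic
      (Matrix.of fun a c => |P a c| * |Q (Fin.castLE hnm a) (Fin.castLE hnm c)|) where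
  nonneg _ _ := mul_nonneg (abs_nonneg _) (abs_nonneg _)
  sum_row_le_one a := sum_abs_mul_abs_le_one
    (sum_sq_row_eq_one_of_mul_transpose_eq_one hP a).le
    ((sum_castLE_le_sum hnm fun _ => sq_nonneg _).trans
      (sum_sq_row_eq_one_of_mul_transpose_eq_one hQ _).le)
  sum_col_le_one c := sum_abs_mul_abs_le_one
    (sum_sq_col_eq_one_of_mul_transpose_eq_one hP c).le
    ((sum_castLE_le_sum hnm (g := fun b => Q b _ ^ 2) fun _ => sq_nonneg _).trans
      (sum_sq_col_eq_one_of_mul_transpose_eq_one hQ _).le)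

/-- von Neumann's trace inequality. -/
theorem sum_mul_mul_rdiag_mul_transpose_le {n m : ℕ} (hnm : n ≤ m) {x : Fin n → ℝ} (hx : Antitone x)
    (hx0 : ∀ i, 0 ≤ x i) {P : Matrix (Fin n) (Fin n) ℝ} {Q : Matrix (Fin m) (Fin m) ℝ}
    (hP : P * Pᵀ = 1) (hQ : Q * Qᵀ = 1) (s : Fin n → ℝ) {τ : Equiv.Perm (Fin n)}
    (hτ : Antitone fun i => |s (τ i)|) :
    ∑ a, x a * (P * rdiag n m s * Qᵀ) a (Fin.castLE hnm a) ≤ ∑ a, x a * |s (τ a)| := by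
  set D := Matrix.of fun a c => |P a c| * |Q (Fin.castLE hnm a) (Fin.castLE hnm c)| with hD_def
  have hD := (isDoublySubstochastic_abs_mul_abs hnm hP hQ).submatrix (Equiv.refl _) τ
  have hterm : ∀ a c, x a * (P a c * s c * Q (Fin.castLE hnm a) (Fin.castLE hnm c))
      ≤ x a * |s c| * D a c := fun a c => by
    rw [hD_def, Matrix.of_apply, mul_assoc (x a) |s c|]
    refine mul_le_mul_of_nonneg_left ((le_abs_self _).trans_eq ?_) (hx0 a)
    simp only [abs_mul]
    ring
  calc ∑ a, x a * (P * rdiag n m s * Qᵀ) a (Fin.castLE hnm a)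
      ≤ ∑ a, ∑ c, x a * |s c| * D a c := by
        simp only [mul_rdiag_mul_transpose_apply hnm, mul_sum]
        exact sum_le_sum fun a _ => sum_le_sum fun c _ => hterm a c
    _ = ∑ a, ∑ c, x a * |s (τ c)| * D.submatrix (Equiv.refl _) τ a c := by
        simp only [Matrix.submatrix_apply, Equiv.refl_apply]
        exact sum_congr rfl fun a _ => (Equiv.sum_comp τ (fun c => x a * |s c| * D a c)).symm
    _ ≤ ∑ a, x a * |s (τ a)| := hD.sum_sum_mul_le hx hx0 hτ fun _ => abs_nonneg _

theorem exists_perm_antitone_abs {n : ℕ} (s : Fin n → ℝ) :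
    ∃ τ : Equiv.Perm (Fin n), Antitone fun i => |s (τ i)| :=
  ⟨Tuple.sort (fun i => -|s i|), fun _ _ hij =>
    neg_le_neg_iff.1 (Tuple.monotone_sort (fun i => -|s i|) hij)⟩

theorem AbsPermInv.abs_comp_mem {n : ℕ} {Q : Set (Fin n → ℝ)} (hQ : AbsPermInv Q) {s : Fin n → ℝ}
    (hs : s ∈ Q) (τ : Equiv.Perm (Fin n)) : (fun i => |s (τ i)|) ∈ Q := by
  convert hQ τ (fun i => if 0 ≤ s (τ i) then 1 else -1) (fun i => by split_ifs <;> simp) s hs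
    using 2 with i
  split_ifs with hsi
  · rw [abs_of_nonneg hsi, one_mul]
  · rw [abs_of_neg (not_le.1 hsi), neg_one_mul]

theorem vnorm_abs_comp_perm {n : ℕ} (s : Fin n → ℝ) (τ : Equiv.Perm (Fin n)) :
    vnorm (fun i => |s (τ i)|) = vnorm s := by
  simp only [vnorm, sq_abs]
  rw [Equiv.sum_comp τ (fun i => s i ^ 2)]

theorem vdistSet_le {n : ℕ} (x : Fin n → ℝ) {Q : Set (Fin n → ℝ)} {y : Fin n → ℝ} (hy : y ∈ Q) :
    vdistSet x Q ≤ vnorm (x - y) :=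
  csInf_le ⟨0, by rintro _ ⟨_, _, rfl⟩; exact Real.sqrt_nonneg _⟩ ⟨y, hy, rfl⟩

theorem transpose_mul_mul_transpose_eq_one {k : ℕ} {A B : Matrix (Fin k) (Fin k) ℝ}
    (hA : A * Aᵀ = 1) (hB : B * Bᵀ = 1) : Aᵀ * B * (Aᵀ * B)ᵀ = 1 := by
  rw [Matrix.transpose_mul, Matrix.transpose_transpose, Matrix.mul_assoc, ← Matrix.mul_assoc B,
    hB, Matrix.one_mul, mul_eq_one_comm.mp hA]

theorem vdistSet_le_frobNorm_sub {n m : ℕ} (hnm : n ≤ m) {Q : Set (Fin n → ℝ)} (hQ : AbsPermInv Q)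
    {U U' : Matrix (Fin n) (Fin n) ℝ} {V V' : Matrix (Fin m) (Fin m) ℝ}
    (hU : U * Uᵀ = 1) (hV : V * Vᵀ = 1) (hU' : U' * U'ᵀ = 1) (hV' : V' * V'ᵀ = 1)
    {x : Fin n → ℝ} (hx : Antitone x) (hx0 : ∀ i, 0 ≤ x i) {s : Fin n → ℝ} (hs : s ∈ Q) :
    vdistSet x Q ≤ frobNorm (U * rdiag n m x * Vᵀ - U' * rdiag n m s * V'ᵀ) := by
  obtain ⟨τ, hτ⟩ := exists_perm_antitone_abs s
  have hP := transpose_mul_mul_transpose_eq_one hU hU'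
  have hR := transpose_mul_mul_transpose_eq_one hV hV'
  have hrot : U * rdiag n m x * Vᵀ - U' * rdiag n m s * V'ᵀ
      = U * (rdiag n m x - Uᵀ * U' * rdiag n m s * (Vᵀ * V')ᵀ) * Vᵀ := by
    simp only [Matrix.mul_sub, Matrix.sub_mul, Matrix.transpose_mul, Matrix.transpose_transpose,
      ← Matrix.mul_assoc, hU, Matrix.one_mul]
    simp only [Matrix.mul_assoc, hV, Matrix.mul_one]
  have hsq : vnorm (x - fun i => |s (τ i)|) ^ 2
      ≤ frobNorm (rdiag n m x - Uᵀ * U' * rdiag n m s * (Vᵀ * V')ᵀ) ^ 2 := by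
    rw [vnorm_sub_sq, frobNorm_rdiag_sub_sq hnm, frobNorm_mul_mul_transpose hP hR,
      frobNorm_rdiag hnm, vnorm_abs_comp_perm]
    linarith [sum_mul_mul_rdiag_mul_transpose_le hnm hx hx0 hP hR s hτ]
  calc vdistSet x Q ≤ vnorm (x - fun i => |s (τ i)|) := vdistSet_le x (hQ.abs_comp_mem hs τ)
    _ ≤ _ := by
      rw [hrot, frobNorm_mul_mul_transpose hU hV]
      exact (pow_le_pow_iff_left₀ (Real.sqrt_nonneg _) (Real.sqrt_nonneg _) two_ne_zero).1 hsq

/-- **Projection onto spectral sets (rectangular case).** -/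
theorem projection_onto_spectral_set_rect
    (n m : ℕ) (hnm : n ≤ m) (Q : Set (Fin n → ℝ)) (hQ : AbsPermInv Q)
    (S : Set (Matrix (Fin n) (Fin m) ℝ))
    (hS : S = {A | ∃ (U : Matrix (Fin n) (Fin n) ℝ) (V : Matrix (Fin m) (Fin m) ℝ),
      U * Uᵀ = 1 ∧ V * Vᵀ = 1 ∧ ∃ s ∈ Q, A = U * rdiag n m s * Vᵀ})
    (U : Matrix (Fin n) (Fin n) ℝ) (V : Matrix (Fin m) (Fin m) ℝ)
    (hU : U * Uᵀ = 1) (hV : V * Vᵀ = 1)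
    (x : Fin n → ℝ) (hx : ∀ i j : Fin n, i ≤ j → x j ≤ x i) (hx0 : ∀ i, 0 ≤ x i)
    (X : Matrix (Fin n) (Fin m) ℝ) (hX : X = U * rdiag n m x * Vᵀ)
    (z : Fin n → ℝ) (hz : z ∈ Q) (hzx : vnorm (x - z) = vdistSet x Q) :
    U * rdiag n m z * Vᵀ ∈ S ∧
      frobNorm (X - U * rdiag n m z * Vᵀ) = frobDistSet X S := by
  have hY : U * rdiag n m z * Vᵀ ∈ S := by
    rw [hS]
    exact ⟨U, V, hU, hV, z, hz, rfl⟩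
  have hXY : frobNorm (X - U * rdiag n m z * Vᵀ) = vdistSet x Q := by
    rw [hX, ← Matrix.sub_mul, ← Matrix.mul_sub, ← rdiag_sub, frobNorm_mul_mul_transpose hU hV,
      frobNorm_rdiag hnm, hzx]
  have hleast :
      IsLeast ((fun Z => frobNorm (X - Z)) '' S) (frobNorm (X - U * rdiag n m z * Vᵀ)) := by
    refine ⟨⟨_, hY, rfl⟩, ?_⟩
    rintro _ ⟨Z, hZ, rfl⟩
    rw [hS] at hZ
    obtain ⟨U', V', hU', hV', s, hs, rfl⟩ := hZ
    rw [hXY, hX]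
    exact vdistSet_le_frobNorm_sub hnm hQ hU hV hU' hV' hx hx0 hs
  exact ⟨hY, hleast.csInf_eq.symm⟩

end
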